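/- Suppose the treatment W_t is unconfounded given the observed history: f(W_t | full history including all potential outcomes) = f(W_t | H_t), where H_t is the observed history. Then the treatment is unconfounded given the propensity score alone: f(W_t | full history) = f(W_t | e_t), where e_t(w) = f(W_t = w | H_t). -/

import Mathlib

open MeasureTheory

/-! The propensity score `e w` is itself measurable for `σ(e)`, so conditioning it on `σ(e)`
returns it unchanged; unconfoundedness then identifies it with the density given the full
history. -/

section ComapPi

variable {Ω ι β : Type*}

theorem measurable_apply_comap_pi [MeasurableSpace β] (f : ι → Ω → β) (i : ι) :
    Measurable[MeasurableSpace.comap (fun ω i => f i ω) MeasurableSpace.pi] (f i) :=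
  (measurable_pi_apply i).comp (comap_measurable fun ω i => f i ω)

theorem condExp_apply_comap_pi {m0 : MeasurableSpace Ω} (μ : Measure Ω)
    [NormedAddCommGroup β] [NormedSpace ℝ β] [CompleteSpace β] [MeasurableSpace β]
    [BorelSpace β] [SecondCountableTopology β] (f : ι → Ω → β)
    (hle : MeasurableSpace.comap (fun ω i => f i ω) MeasurableSpace.pi ≤ m0)
    [SigmaFinite (μ.trim hle)] (i : ι) (hfi : Integrable (f i) μ) :
    μ[f i | MeasurableSpace.comap (fun ω i => f i ω) MeasurableSpace.pi] = f i :=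
  condExp_of_stronglyMeasurable hle (measurable_apply_comap_pi f i).stronglyMeasurable hfi

end ComapPi

theorem stmt3_general {Ω 𝒲 : Type*} {m0 : MeasurableSpace Ω} (μ : Measure Ω) [IsProbabilityMeasure μ]
    (dstar e : 𝒲 → Ω → ℝ)
    (he_int : ∀ w, Integrable (e w) μ)
    (hgle : MeasurableSpace.comap (fun ω (w : 𝒲) => e w ω) MeasurableSpace.pi ≤ m0)
    -- unconfoundedness: the density given the full history equals the density given Hₜ
    (hunconf : ∀ w, dstar w =ᵐ[μ] e w) :
    ∀ w : 𝒲,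
      dstar w =ᵐ[μ]
        μ[e w | MeasurableSpace.comap (fun ω (w : 𝒲) => e w ω) MeasurableSpace.pi] := by
  intro w
  rw [condExp_apply_comap_pi μ e hgle w (he_int w)]
  exact hunconf w

/-- Unconfoundedness given the propensity score: if the conditional density of the treatment
    given the full history `H*` coincides with the conditional density `e w` given the observed
    history `H_t` (unconfoundedness), then it also coincides with the conditional density given
    the σ-algebra generated by the propensity score `e` alone, i.e.
    f(W_t | H*) = f(W_t | σ(e_t)), where f(W_t | σ(e_t)) = E[e_t(w) | σ(e_t)]. -/
theorem stmt3 {Ω 𝒲 : Type*} {m0 : MeasurableSpace Ω} (μ : Measure Ω) [IsProbabilityMeasure μ]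
    (Hstar Ht : MeasurableSpace Ω) (hHt : Ht ≤ Hstar) (hHstar : Hstar ≤ m0)
    (dstar e : 𝒲 → Ω → ℝ)
    (hdstar_meas : ∀ w, StronglyMeasurable[Hstar] (dstar w))
    (he_meas : ∀ w, StronglyMeasurable[Ht] (e w))
    (he_int : ∀ w, Integrable (e w) μ)
    (hgle : MeasurableSpace.comap (fun ω (w : 𝒲) => e w ω) MeasurableSpace.pi ≤ m0)
    -- unconfoundedness: the density given the full history equals the density given Hₜ
    (hunconf : ∀ w, dstar w =ᵐ[μ] e w) :
    ∀ w : 𝒲,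
      dstar w =ᵐ[μ]
        μ[e w | MeasurableSpace.comap (fun ω (w : 𝒲) => e w ω) MeasurableSpace.pi] :=
  stmt3_general μ dstar e he_int hgle hunconf
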